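/- Assume each q_i is Lipschitz continuous and let f be the bounded fractal function. Define the Laplace-type transform f̂(s) = ∫_{x_0}^{x_N} e^{−sx} f(x) dx and Q̂(s) = ∫_{x_0}^{x_N} e^{−sx} Q(x) dx, where Q(x) = q_i(L_i^{-1}(x)) for x ∈ I_i. Then for every real s, f̂(s) = ∑_{i=1}^N a_i α_i e^{−s b_i} f̂(a_i s) + Q̂(s). -/

import Mathlib

open Set

noncomputable def aC (x : ℕ → ℝ) (N i : ℕ) : ℝ := (x (i + 1) - x i) / (x N - x 0)

noncomputable def bC (x : ℕ → ℝ) (N i : ℕ) : ℝ := (x N * x i - x 0 * x (i + 1)) / (x N - x 0)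

/-- The affine map `L i t = a i * t + b i`. -/
noncomputable def Lm (x : ℕ → ℝ) (N i : ℕ) (t : ℝ) : ℝ := aC x N i * t + bC x N i

/-- The inverse `L i ⁻¹ t = (t - b i) / a i` of the affine map `L i`. -/
noncomputable def LmInv (x : ℕ → ℝ) (N i : ℕ) (t : ℝ) : ℝ := (t - bC x N i) / aC x N i

/-!
On each piece `[x i, x (i + 1)]` the substitution `t = L_i u` turns `∫ e^{-st} f t` into
`a_i e^{-s b_i} ∫_{x 0}^{x N} e^{-a_i s u} f (L_i u) du`, and the self-affinity
`f (L_i u) = α_i f u + q_i u` splits this into the `f̂(a_i s)` term and the matching piece of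
`Q̂(s)`; summing over the pieces gives the identity. The only delicate point is that `f` is just
bounded: on `[x 0, x N)` it solves `f = A · f ∘ S + Q` with piecewise continuous coefficients and
`|A| ≤ r < 1`, so it is the uniform limit of measurable Picard iterates, hence integrable.
-/

open Filter Topology MeasureTheory

section PicardIteration

variable {α : Type*} {A Q : α → ℝ} {S : α → α}

def picardIter (A Q : α → ℝ) (S : α → α) : ℕ → α → ℝ
  | 0 => 0
  | n + 1 => fun t => A t * picardIter A Q S n (S t) + Q t

lemma measurable_picardIter [MeasurableSpace α] (hA : Measurable A) (hQ : Measurable Q)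
    (hS : Measurable S) (n : ℕ) : Measurable (picardIter A Q S n) := by
  induction n with
  | zero => exact measurable_const
  | succ n ih => exact (hA.mul (ih.comp hS)).add hQ

variable {E : Set α} {f : α → ℝ} {r M : ℝ}

lemma abs_sub_picardIter_le (hS : MapsTo S E E) (hA : ∀ t ∈ E, |A t| ≤ r) (hr0 : 0 ≤ r)
    (hfM : ∀ t ∈ E, |f t| ≤ M) (hf : ∀ t ∈ E, f t = A t * f (S t) + Q t) (n : ℕ) :
    ∀ t ∈ E, |f t - picardIter A Q S n t| ≤ M * r ^ n := by
  induction n with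
  | zero => simpa [picardIter] using hfM
  | succ n ih =>
    intro t ht
    calc |f t - picardIter A Q S (n + 1) t|
        = |A t| * |f (S t) - picardIter A Q S n (S t)| := by
          rw [← abs_mul, hf t ht, picardIter]; ring_nf
      _ ≤ r * (M * r ^ n) := mul_le_mul (hA t ht) (ih (S t) (hS ht)) (abs_nonneg _) hr0
      _ = M * r ^ (n + 1) := by ring

lemma tendsto_picardIter (hS : MapsTo S E E) (hA : ∀ t ∈ E, |A t| ≤ r) (hr0 : 0 ≤ r)
    (hr1 : r < 1) (hfM : ∀ t ∈ E, |f t| ≤ M) (hf : ∀ t ∈ E, f t = A t * f (S t) + Q t)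
    {t : α} (ht : t ∈ E) : Tendsto (fun n => picardIter A Q S n t) atTop (𝓝 (f t)) := by
  rw [tendsto_iff_dist_tendsto_zero]
  refine squeeze_zero (fun _ => dist_nonneg) (fun n => ?_)
    (by simpa using (tendsto_pow_atTop_nhds_zero_of_lt_one hr0 hr1).const_mul M)
  rw [Real.dist_eq, abs_sub_comm]
  exact abs_sub_picardIter_le hS hA hr0 hfM hf n t ht

lemma aemeasurable_of_eq_mul_comp_add [MeasurableSpace α] {μ : Measure α}
    (hE : MeasurableSet E) (hAm : Measurable A) (hQm : Measurable Q) (hSm : Measurable S)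
    (hS : MapsTo S E E) (hA : ∀ t ∈ E, |A t| ≤ r) (hr0 : 0 ≤ r) (hr1 : r < 1)
    (hfM : ∀ t ∈ E, |f t| ≤ M) (hf : ∀ t ∈ E, f t = A t * f (S t) + Q t) :
    AEMeasurable f (μ.restrict E) :=
  aemeasurable_of_tendsto_metrizable_ae atTop
    (fun n => (measurable_picardIter hAm hQm hSm n).aemeasurable)
    ((ae_restrict_mem hE).mono fun _ ht => tendsto_picardIter hS hA hr0 hr1 hfM hf ht)

end PicardIteration

lemma exists_abs_le_lt_one {α : ℕ → ℝ} {N : ℕ} (h : ∀ i < N, |α i| < 1) :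
    ∃ r, 0 ≤ r ∧ r < 1 ∧ ∀ i < N, |α i| ≤ r := by
  refine ⟨↑((Finset.range N).sup fun i => ‖α i‖₊), NNReal.coe_nonneg _, ?_, fun i hi => ?_⟩
  · rw [← NNReal.coe_one, NNReal.coe_lt_coe, Finset.sup_lt_iff zero_lt_one]
    intro i hi
    rw [← NNReal.coe_lt_coe]
    exact h i (Finset.mem_range.1 hi)
  · exact NNReal.coe_le_coe.2 (Finset.le_sup (f := fun i => ‖α i‖₊) (Finset.mem_range.2 hi))

section Pieces

variable {x : ℕ → ℝ} {N : ℕ}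

noncomputable def pieceSum (x : ℕ → ℝ) (N : ℕ) (g : ℕ → ℝ → ℝ) (t : ℝ) : ℝ :=
  ∑ i ∈ Finset.range N, (Ico (x i) (x (i + 1))).indicator (g i) t

lemma exists_mem_Ico_succ (x : ℕ → ℝ) {t : ℝ} :
    ∀ {N : ℕ}, t ∈ Ico (x 0) (x N) → ∃ j < N, t ∈ Ico (x j) (x (j + 1))
  | 0, ht => absurd ht.2 (not_lt.2 ht.1)
  | N + 1, ht => by
    by_cases h : t < x N
    · obtain ⟨j, hj, hjt⟩ := exists_mem_Ico_succ x ⟨ht.1, h⟩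
      exact ⟨j, by omega, hjt⟩
    · exact ⟨N, N.lt_succ_self, not_lt.1 h, ht.2⟩

lemma pieceSum_of_mem (hx : MonotoneOn x (Iic N)) {j : ℕ} (hj : j < N) {t : ℝ}
    (ht : t ∈ Ico (x j) (x (j + 1))) (g : ℕ → ℝ → ℝ) : pieceSum x N g t = g j t := by
  rw [pieceSum, Finset.sum_eq_single_of_mem j (Finset.mem_range.2 hj), indicator_of_mem ht]
  intro i hi hij
  refine indicator_of_notMem (fun hit => ?_) _
  have hiN : i < N := Finset.mem_range.1 hi
  rcases hij.lt_or_gt with h | h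
  · exact (hit.2.trans_le ((hx (mem_Iic.2 (by omega)) (mem_Iic.2 hj.le) h).trans ht.1)).false
  · exact (ht.2.trans_le ((hx (mem_Iic.2 (by omega)) (mem_Iic.2 hiN.le) h).trans hit.1)).false

lemma measurable_pieceSum {g : ℕ → ℝ → ℝ}
    (hg : ∀ i < N, ContinuousOn (g i) (Ico (x i) (x (i + 1)))) :
    Measurable (pieceSum x N g) := by
  classical
  refine Finset.measurable_sum _ fun i hi => ?_
  simp_rw [← piecewise_eq_indicator]
  exact (hg i (Finset.mem_range.1 hi)).measurable_piecewise continuousOn_const measurableSet_Ico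

end Pieces


section AffineMaps

variable {x : ℕ → ℝ} {N i : ℕ}

lemma aC_pos (h0N : x 0 < x N) (hi : x i < x (i + 1)) : 0 < aC x N i :=
  div_pos (sub_pos.2 hi) (sub_pos.2 h0N)

lemma Lm_left (h0N : x 0 ≠ x N) : Lm x N i (x 0) = x i := by
  have : x N - x 0 ≠ 0 := sub_ne_zero.2 h0N.symm
  simp only [Lm, aC, bC]
  field_simp
  ring

lemma Lm_right (h0N : x 0 ≠ x N) : Lm x N i (x N) = x (i + 1) := by
  have : x N - x 0 ≠ 0 := sub_ne_zero.2 h0N.symm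
  simp only [Lm, aC, bC]
  field_simp
  ring

lemma LmInv_Lm (ha : aC x N i ≠ 0) (t : ℝ) : LmInv x N i (Lm x N i t) = t := by
  simp only [Lm, LmInv]
  field_simp
  ring

lemma Lm_LmInv (ha : aC x N i ≠ 0) (t : ℝ) : Lm x N i (LmInv x N i t) = t := by
  simp only [Lm, LmInv]
  field_simp
  ring

lemma LmInv_left (h0N : x 0 ≠ x N) (ha : aC x N i ≠ 0) : LmInv x N i (x i) = x 0 := by
  simpa only [Lm_left h0N] using LmInv_Lm ha (x 0)

lemma LmInv_right (h0N : x 0 ≠ x N) (ha : aC x N i ≠ 0) : LmInv x N i (x (i + 1)) = x N := by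
  simpa only [Lm_right h0N] using LmInv_Lm ha (x N)

lemma continuous_LmInv : Continuous (LmInv x N i) :=
  (continuous_id.sub continuous_const).div_const _

lemma strictMono_LmInv (ha : 0 < aC x N i) : StrictMono (LmInv x N i) :=
  fun _ _ h => div_lt_div_of_pos_right (sub_lt_sub_right h _) ha

lemma mapsTo_LmInv_Ico (h0N : x 0 < x N) (hi : x i < x (i + 1)) :
    MapsTo (LmInv x N i) (Ico (x i) (x (i + 1))) (Ico (x 0) (x N)) := by
  have ha := aC_pos h0N hi
  simpa only [LmInv_left h0N.ne ha.ne', LmInv_right h0N.ne ha.ne'] using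
    (strictMono_LmInv ha).mapsTo_Ico (a := x i) (b := x (i + 1))

lemma mapsTo_LmInv_Icc (h0N : x 0 < x N) (hi : x i < x (i + 1)) :
    MapsTo (LmInv x N i) (Icc (x i) (x (i + 1))) (Icc (x 0) (x N)) := by
  have ha := aC_pos h0N hi
  simpa only [LmInv_left h0N.ne ha.ne', LmInv_right h0N.ne ha.ne'] using
    (strictMono_LmInv ha).monotone.mapsTo_Icc (a := x i) (b := x (i + 1))

lemma integral_piece_eq (h0N : x 0 ≠ x N) (ha : aC x N i ≠ 0) (s : ℝ) (g : ℝ → ℝ) :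
    ∫ t in (x i)..(x (i + 1)), Real.exp (-(s * t)) * g t =
      aC x N i * Real.exp (-(s * bC x N i)) *
        ∫ u in (x 0)..(x N), Real.exp (-(aC x N i * s * u)) * g (Lm x N i u) := by
  have hsubst := intervalIntegral.integral_comp_mul_add (a := x 0) (b := x N)
    (fun t => Real.exp (-(s * t)) * g t) ha (bC x N i)
  rw [show aC x N i * x 0 + bC x N i = x i from Lm_left h0N,
    show aC x N i * x N + bC x N i = x (i + 1) from Lm_right h0N, smul_eq_mul] at hsubst
  calc ∫ t in (x i)..(x (i + 1)), Real.exp (-(s * t)) * g t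
      = aC x N i * ∫ u in (x 0)..(x N), Real.exp (-(s * Lm x N i u)) * g (Lm x N i u) := by
        rw [show (∫ u in (x 0)..(x N), Real.exp (-(s * Lm x N i u)) * g (Lm x N i u)) = _
          from hsubst, mul_inv_cancel_left₀ ha]
    _ = aC x N i * ∫ u in (x 0)..(x N),
          Real.exp (-(s * bC x N i)) * (Real.exp (-(aC x N i * s * u)) * g (Lm x N i u)) := by
        congr 1
        refine intervalIntegral.integral_congr fun u _ => ?_
        rw [← mul_assoc, ← Real.exp_add, Lm]
        ring_nf
    _ = _ := by rw [intervalIntegral.integral_const_mul, mul_assoc]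

end AffineMaps

section FractalFunction

variable {x : ℕ → ℝ} {N : ℕ}

lemma uIcc_piece_subset (hx : MonotoneOn x (Iic N)) {i : ℕ} (hi : i < N) :
    uIcc (x i) (x (i + 1)) ⊆ uIcc (x 0) (x N) :=
  uIcc_subset_uIcc
    (mem_uIcc_of_le (hx (mem_Iic.2 (Nat.zero_le _)) (mem_Iic.2 hi.le) (Nat.zero_le _))
      (hx (mem_Iic.2 hi.le) (mem_Iic.2 le_rfl) hi.le))
    (mem_uIcc_of_le (hx (mem_Iic.2 (Nat.zero_le _)) (mem_Iic.2 hi) (Nat.zero_le _))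
      (hx (mem_Iic.2 hi) (mem_Iic.2 le_rfl) hi))

lemma aemeasurable_restrict_of_eq_comp_Lm {α : ℕ → ℝ} {q : ℕ → ℝ → ℝ} {f : ℝ → ℝ} {r M : ℝ}
    (hx : ∀ i < N, x i < x (i + 1)) (h0N : x 0 < x N) (hα : ∀ i < N, |α i| ≤ r) (hr0 : 0 ≤ r)
    (hr1 : r < 1) (hq : ∀ i < N, ContinuousOn (q i) (Icc (x 0) (x N)))
    (hfM : ∀ t ∈ Ico (x 0) (x N), |f t| ≤ M)
    (hfe : ∀ i < N, ∀ t ∈ Ico (x 0) (x N), f (Lm x N i t) = α i * f t + q i t) :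
    AEMeasurable f (volume.restrict (Ico (x 0) (x N))) := by
  have hmono : MonotoneOn x (Iic N) := (strictMonoOn_Iic_of_lt_succ hx).monotoneOn
  have hLmInv : ∀ i < N, MapsTo (LmInv x N i) (Ico (x i) (x (i + 1))) (Ico (x 0) (x N)) :=
    fun i hi => mapsTo_LmInv_Ico h0N (hx i hi)
  refine aemeasurable_of_eq_mul_comp_add (A := pieceSum x N fun i _ => α i)
    (Q := pieceSum x N fun i t => q i (LmInv x N i t)) (S := pieceSum x N (LmInv x N))
    measurableSet_Ico (measurable_pieceSum fun _ _ => continuousOn_const)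
    (measurable_pieceSum fun i hi => (hq i hi).comp continuous_LmInv.continuousOn
      ((hLmInv i hi).mono_right Ico_subset_Icc_self))
    (measurable_pieceSum fun _ _ => continuous_LmInv.continuousOn)
    (fun t ht => ?_) (fun t ht => ?_) hr0 hr1 hfM (fun t ht => ?_) <;>
  obtain ⟨j, hj, htj⟩ := exists_mem_Ico_succ x ht <;>
  simp only [pieceSum_of_mem hmono hj htj]
  · exact hLmInv j hj htj
  · exact hα j hj
  · rw [← hfe j hj _ (hLmInv j hj htj), Lm_LmInv (aC_pos h0N (hx j hj)).ne']

lemma intervalIntegrable_piece {i : ℕ} (h0N : x 0 < x N) (hi : x i < x (i + 1)) {q Qf : ℝ → ℝ}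
    (hq : ContinuousOn q (Icc (x 0) (x N)))
    (hQf : ∀ t ∈ Ico (x i) (x (i + 1)), Qf t = q (LmInv x N i t)) (s : ℝ) :
    IntervalIntegrable (fun t => Real.exp (-(s * t)) * Qf t) volume (x i) (x (i + 1)) := by
  have hcont : ContinuousOn (fun t => Real.exp (-(s * t)) * q (LmInv x N i t))
      (uIcc (x i) (x (i + 1))) := by
    rw [uIcc_of_le hi.le]
    exact (Continuous.continuousOn (by fun_prop)).mul
      (hq.comp continuous_LmInv.continuousOn (mapsTo_LmInv_Icc h0N hi))
  refine hcont.intervalIntegrable.congr_uIoo fun t ht => ?_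
  rw [uIoo_of_le hi.le] at ht
  simp only [hQf t (Ioo_subset_Ico_self ht)]

lemma integral_piece_eq_add {i : ℕ} (h0N : x 0 < x N) (hi : x i < x (i + 1)) {s a : ℝ}
    {f q Qf : ℝ → ℝ}
    (hf : IntervalIntegrable (fun u => Real.exp (-(aC x N i * s * u)) * f u) volume (x 0) (x N))
    (hq : IntervalIntegrable (fun u => Real.exp (-(aC x N i * s * u)) * q u) volume (x 0) (x N))
    (hfe : ∀ t ∈ Ico (x 0) (x N), f (Lm x N i t) = a * f t + q t)
    (hQf : ∀ t ∈ Ico (x i) (x (i + 1)), Qf t = q (LmInv x N i t)) :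
    ∫ t in (x i)..(x (i + 1)), Real.exp (-(s * t)) * f t =
      aC x N i * a * Real.exp (-(s * bC x N i)) *
          (∫ u in (x 0)..(x N), Real.exp (-(aC x N i * s * u)) * f u) +
        ∫ t in (x i)..(x (i + 1)), Real.exp (-(s * t)) * Qf t := by
  have ha := aC_pos h0N hi
  have hQ : ∫ t in (x i)..(x (i + 1)), Real.exp (-(s * t)) * Qf t =
      aC x N i * Real.exp (-(s * bC x N i)) *
        ∫ u in (x 0)..(x N), Real.exp (-(aC x N i * s * u)) * q u := by
    rw [intervalIntegral.integral_congr_Ioo_of_le (g := fun t => Real.exp (-(s * t)) * q (LmInv x N i t))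
      hi.le fun t ht => by simp only [hQf t (Ioo_subset_Ico_self ht)],
      integral_piece_eq h0N.ne ha.ne']
    simp only [LmInv_Lm ha.ne']
  have hF : ∫ u in (x 0)..(x N), Real.exp (-(aC x N i * s * u)) * f (Lm x N i u) =
      a * (∫ u in (x 0)..(x N), Real.exp (-(aC x N i * s * u)) * f u) +
        ∫ u in (x 0)..(x N), Real.exp (-(aC x N i * s * u)) * q u := by
    rw [← intervalIntegral.integral_const_mul, ← intervalIntegral.integral_add (hf.const_mul a) hq]
    refine intervalIntegral.integral_congr_Ioo_of_le h0N.le fun u hu => ?_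
    simp only [hfe u (Ioo_subset_Ico_self hu)]
    ring
  rw [integral_piece_eq h0N.ne ha.ne' s f, hF, hQ]
  ring

end FractalFunction

theorem stmt15_general
    (N : ℕ) (hN : 2 ≤ N)
    (x : ℕ → ℝ)
    (hx : ∀ i, i < N → x i < x (i + 1))
    (α : ℕ → ℝ) (hα : ∀ i, i < N → |α i| < 1)
    (q : ℕ → ℝ → ℝ)
    (hq : ∀ i, i < N → ∃ C, ∀ u ∈ Icc (x 0) (x N), ∀ v ∈ Icc (x 0) (x N),
      |q i u - q i v| ≤ C * |u - v|)
    (f : ℝ → ℝ)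
    (hfb : ∃ M, ∀ t ∈ Icc (x 0) (x N), |f t| ≤ M)
    (hfe : ∀ i, i < N → ∀ t ∈ Ico (x 0) (x N), f (Lm x N i t) = α i * f t + q i t)
    (Qf : ℝ → ℝ)
    (hQf : ∀ i, i < N → ∀ t ∈ Ico (x i) (x (i + 1)), Qf t = q i (LmInv x N i t)) :
    ∀ s : ℝ,
      ∫ t in (x 0)..(x N), Real.exp (-(s * t)) * f t =
        (∑ i ∈ Finset.range N,
          aC x N i * α i * Real.exp (-(s * bC x N i)) *
            ∫ t in (x 0)..(x N), Real.exp (-(aC x N i * s * t)) * f t) +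
        ∫ t in (x 0)..(x N), Real.exp (-(s * t)) * Qf t := by
  intro s
  have hmono : StrictMonoOn x (Iic N) := strictMonoOn_Iic_of_lt_succ hx
  have h0N : x 0 < x N := hmono (mem_Iic.2 (Nat.zero_le N)) (mem_Iic.2 le_rfl) (by omega)
  have hqc : ∀ i < N, ContinuousOn (q i) (Icc (x 0) (x N)) := fun i hi => by
    obtain ⟨C, hC⟩ := hq i hi
    exact (LipschitzOnWith.of_dist_le' (K := C) fun u hu v hv => by
      simpa only [Real.dist_eq] using hC u hu v hv).continuousOn
  obtain ⟨r, hr0, hr1, hαr⟩ := exists_abs_le_lt_one hα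
  obtain ⟨M, hM⟩ := hfb
  have hfm := aemeasurable_restrict_of_eq_comp_Lm hx h0N hαr hr0 hr1 hqc
    (fun t ht => hM t (Ico_subset_Icc_self ht)) hfe
  have hfi : IntervalIntegrable f volume (x 0) (x N) := by
    rw [intervalIntegrable_iff_integrableOn_Ico_of_le h0N.le]
    exact Integrable.of_bound hfm.aestronglyMeasurable M
      ((ae_restrict_mem measurableSet_Ico).mono fun t ht => hM t (Ico_subset_Icc_self ht))
  have hexp : ∀ c : ℝ, ContinuousOn (fun u => Real.exp (-(c * u))) (uIcc (x 0) (x N)) :=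
    fun c => Continuous.continuousOn (by fun_prop)
  rw [← intervalIntegral.sum_integral_adjacent_intervals (a := x) fun i hi =>
      (hfi.continuousOn_mul (hexp s)).mono_set (uIcc_piece_subset hmono.monotoneOn hi),
    ← intervalIntegral.sum_integral_adjacent_intervals (a := x) fun i hi =>
      intervalIntegrable_piece h0N (hx i hi) (hqc i hi) (hQf i hi) s,
    ← Finset.sum_add_distrib]
  refine Finset.sum_congr rfl fun i hi => ?_
  have hi : i < N := Finset.mem_range.1 hi
  exact integral_piece_eq_add h0N (hx i hi) (hfi.continuousOn_mul (hexp _))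
    (((hexp _).mul ((hqc i hi).mono (by rw [uIcc_of_le h0N.le])))).intervalIntegrable
    (hfe i hi) (hQf i hi)

/-- Functional equation for the Laplace-type transform of the bounded fractal function:
`f̂(s) = ∑ i a i α i e^{-s b i} f̂(a i s) + Q̂(s)`. -/
theorem stmt15
    (N : ℕ) (hN : 2 ≤ N)
    (x : ℕ → ℝ)
    (hx : ∀ i, i < N → x i < x (i + 1))
    (α : ℕ → ℝ) (hα : ∀ i, i < N → |α i| < 1)
    (q : ℕ → ℝ → ℝ)
    (hq : ∀ i, i < N → ∃ C, ∀ u ∈ Icc (x 0) (x N), ∀ v ∈ Icc (x 0) (x N),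
      |q i u - q i v| ≤ C * |u - v|)
    (f : ℝ → ℝ)
    (hfb : ∃ M, ∀ t ∈ Icc (x 0) (x N), |f t| ≤ M)
    (hfe : ∀ i, i < N → ∀ t ∈ Ico (x 0) (x N), f (Lm x N i t) = α i * f t + q i t)
    (hfeN : f (Lm x N (N - 1) (x N)) = α (N - 1) * f (x N) + q (N - 1) (x N))
    (Qf : ℝ → ℝ)
    (hQf : ∀ i, i < N → ∀ t ∈ Ico (x i) (x (i + 1)), Qf t = q i (LmInv x N i t))
    (hQfN : Qf (x N) = q (N - 1) (LmInv x N (N - 1) (x N))) :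
    ∀ s : ℝ,
      ∫ t in (x 0)..(x N), Real.exp (-(s * t)) * f t =
        (∑ i ∈ Finset.range N,
          aC x N i * α i * Real.exp (-(s * bC x N i)) *
            ∫ t in (x 0)..(x N), Real.exp (-(aC x N i * s * t)) * f t) +
        ∫ t in (x 0)..(x N), Real.exp (-(s * t)) * Qf t :=
  stmt15_general N hN x hx α hα q hq f hfb hfe Qf hQf
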